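/- Let R be an associative ring and κ a regular cardinal. The class of κ-flat left R-modules (modules all of whose maps from κ-presentable modules factor through projectives) is closed under extensions, kernels of surjective morphisms, and κ-filtered colimits. -/

import Mathlib

/-!
Extensions: factor `φ ≫ S.g` through a projective `P`, lift `P ⟶ S.X₃` to `S.X₂`; the error term
lands in `S.X₁` and factors through a projective `Q`, so `φ` factors through `P ⊞ Q`.

Kernels: a map from a `κ`-presentable module into a projective module, a summand of a free one,
has image inside a free summand on `< κ` basis vectors, so `φ ≫ S.f` factors as `E ⟶ R^(Z) ⟶ S.X₂`
with `#Z < κ`. The cokernel of `E ⟶ R^(Z)` is again `κ`-presentable, and factoring its induced map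
to `S.X₃` through a projective yields a correction of `R^(Z) ⟶ S.X₂` with values in `S.X₁`.

Colimits: a `κ`-presentable module has `< κ` generators and `< κ` relations; in a `κ`-filtered
colimit the generators lift to a common stage and the relations already hold at a later one.
-/

open CategoryTheory CategoryTheory.Limits

universe u

/-- A category `J` is `κ`-filtered if every subdiagram of size `< κ` admits a cocone. -/
def IsCardFiltered (J : Type u) [Category.{u} J] (κ : Cardinal.{u}) : Prop :=
  ∀ (K : Type u) (_ : SmallCategory K), Cardinal.mk K < κ →
    Cardinal.mk (Σ (a : K) (b : K), a ⟶ b) < κ →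
    ∀ F : K ⥤ J, Nonempty (Cocone F)

variable {R : Type u} [Ring R]

/-- A left `R`-module is `κ`-presentable if it is the cokernel of a morphism of free
modules each with fewer than `κ` generators. -/
def IsKappaPresentable (κ : Cardinal.{u}) (E : ModuleCat.{u} R) : Prop :=
  ∃ (X Y : Type u) (_ : Cardinal.mk X < κ) (_ : Cardinal.mk Y < κ)
    (g : (X →₀ R) →ₗ[R] (Y →₀ R)),
    Nonempty ((((Y →₀ R)) ⧸ (LinearMap.range g)) ≃ₗ[R] E)

/-- A left `R`-module `F` is `κ`-flat if every morphism from a `κ`-presentable module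
into `F` factors through a projective module. -/
def IsKappaFlat (κ : Cardinal.{u}) (F : ModuleCat.{u} R) : Prop :=
  ∀ (E : ModuleCat.{u} R), IsKappaPresentable κ E → ∀ φ : E ⟶ F,
    ∃ (P : ModuleCat.{u} R) (_ : Projective P) (α : E ⟶ P) (β : P ⟶ F), α ≫ β = φ


open Cardinal

lemma IsKappaPresentable.exists_surjective {κ : Cardinal.{u}} {E : ModuleCat.{u} R}
    (hE : IsKappaPresentable κ E) :
    ∃ (Y : Type u) (_ : #Y < κ) (π : (Y →₀ R) →ₗ[R] E), Function.Surjective π := by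
  obtain ⟨X, Y, -, hY, g, ⟨e⟩⟩ := hE
  exact ⟨Y, hY, e.toLinearMap ∘ₗ (LinearMap.range g).mkQ,
    e.surjective.comp (Submodule.mkQ_surjective _)⟩

lemma exists_forall_mem_supported {κ : Cardinal.{u}} (hκ : κ.IsRegular) {Y Z : Type u}
    {E : Type*} [AddCommGroup E] [Module R E] (hY : #Y < κ) {π : (Y →₀ R) →ₗ[R] E}
    (hπ : Function.Surjective π) (f : E →ₗ[R] (Z →₀ R)) :
    ∃ Z₀ : Set Z, #Z₀ < κ ∧ ∀ m, f m ∈ Finsupp.supported R R Z₀ := by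
  let Z₀ := ⋃ y, ((f (π (Finsupp.single y 1))).support : Set Z)
  have hZ₀ : #Z₀ < κ := mk_iUnion_le_sum_mk.trans_lt <| sum_lt_of_isRegular hκ hY fun y ↦
    (Finset.finite_toSet _).lt_aleph0.trans_le hκ.aleph0_le
  refine ⟨Z₀, hZ₀, fun m ↦ ?_⟩
  obtain ⟨w, rfl⟩ := hπ m
  induction w using Finsupp.induction_linear with
  | zero => simp
  | add w w' hw hw' => simpa using add_mem hw hw'
  | single y r =>
    rw [← Finsupp.smul_single_one, map_smul, map_smul]
    exact Submodule.smul_mem _ _ <| (Finsupp.mem_supported R _).2 <|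
      Set.subset_iUnion (fun y ↦ ((f (π (Finsupp.single y 1))).support : Set Z)) y

lemma exists_factor_finsupp_of_projective {κ : Cardinal.{u}} (hκ : κ.IsRegular) {Y : Type u}
    {E : Type*} {P : Type u} [AddCommGroup E] [Module R E] [AddCommGroup P] [Module R P]
    [Module.Projective R P] (hY : #Y < κ) {π : (Y →₀ R) →ₗ[R] E}
    (hπ : Function.Surjective π) (α : E →ₗ[R] P) :
    ∃ (Z : Type u) (_ : #Z < κ) (α' : E →ₗ[R] (Z →₀ R)) (β' : (Z →₀ R) →ₗ[R] P),
      β' ∘ₗ α' = α := by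
  obtain ⟨s, hs⟩ := Module.projective_def'.1 (inferInstance : Module.Projective R P)
  obtain ⟨Z₀, hZ₀, hsupp⟩ := exists_forall_mem_supported hκ hY hπ (s ∘ₗ α)
  let e := Finsupp.supportedEquivFinsupp (M := R) (R := R) Z₀
  refine ⟨Z₀, hZ₀, e.toLinearMap ∘ₗ (s ∘ₗ α).codRestrict _ hsupp,
    Finsupp.linearCombination R id ∘ₗ (Finsupp.supported R R Z₀).subtype ∘ₗ e.symm.toLinearMap,
    ?_⟩
  ext m
  simp only [LinearMap.comp_apply, LinearEquiv.coe_coe, LinearEquiv.symm_apply_apply]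
  exact LinearMap.congr_fun hs (α m)

lemma IsKappaFlat.exists_factor_finsupp {κ : Cardinal.{u}} (hκ : κ.IsRegular)
    {F E : ModuleCat.{u} R} (hF : IsKappaFlat κ F) (hE : IsKappaPresentable κ E) (φ : E ⟶ F) :
    ∃ (Z : Type u) (_ : #Z < κ) (α : E →ₗ[R] (Z →₀ R)) (β : (Z →₀ R) →ₗ[R] F),
      β ∘ₗ α = φ.hom := by
  obtain ⟨P, _, α, β, hβα⟩ := hF E hE φ
  obtain ⟨Y, hY, π, hπ⟩ := hE.exists_surjective
  obtain ⟨Z, hZ, α', β', hβ'α'⟩ := exists_factor_finsupp_of_projective hκ hY hπ α.hom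
  exact ⟨Z, hZ, α', β.hom ∘ₗ β', by rw [LinearMap.comp_assoc, hβ'α', ← ModuleCat.hom_comp, hβα]⟩

namespace CategoryTheory.ShortComplex.ShortExact

variable {κ : Cardinal.{u}} {S : ShortComplex (ModuleCat.{u} R)}

lemma isKappaFlat_X₂ (hS : S.ShortExact) (h₁ : IsKappaFlat κ S.X₁) (h₃ : IsKappaFlat κ S.X₃) :
    IsKappaFlat κ S.X₂ := by
  intro E hE φ
  obtain ⟨P, _, α, β, hβα⟩ := h₃ E hE (φ ≫ S.g)
  have := hS.epi_g
  have := hS.mono_f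
  let β₂ : P ⟶ S.X₂ := Projective.factorThru β S.g
  have hψ : (φ - α ≫ β₂) ≫ S.g = 0 := by
    rw [Preadditive.sub_comp, Category.assoc, Projective.factorThru_comp, hβα, sub_self]
  obtain ⟨Q, _, α', β', hβ'α'⟩ := h₁ E hE (hS.exact.lift _ hψ)
  refine ⟨P ⊞ Q, inferInstance, biprod.lift α α', biprod.desc β₂ (β' ≫ S.f), ?_⟩
  rw [biprod.lift_desc, ← Category.assoc, hβ'α', hS.exact.lift_f]
  abel

lemma isKappaFlat_X₁ (hκ : κ.IsRegular) (hS : S.ShortExact) (h₂ : IsKappaFlat κ S.X₂)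
    (h₃ : IsKappaFlat κ S.X₃) : IsKappaFlat κ S.X₁ := by
  intro E hE φ
  obtain ⟨Z, hZ, α, β, hβα⟩ := h₂.exists_factor_finsupp hκ hE (φ ≫ S.f)
  obtain ⟨Y, hY, π, hπ⟩ := hE.exists_surjective
  let N := LinearMap.range (α ∘ₗ π)
  have hN : N ≤ LinearMap.ker (S.g.hom ∘ₗ β) := by
    rintro _ ⟨w, rfl⟩
    rw [LinearMap.mem_ker, LinearMap.comp_apply, LinearMap.comp_apply, ← LinearMap.comp_apply β,
      hβα]
    exact S.moduleCat_zero_apply _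
  obtain ⟨Q, _, γ, δ, hδγ⟩ := h₃ (ModuleCat.of R ((Z →₀ R) ⧸ N))
    ⟨Y, Z, hY, hZ, α ∘ₗ π, ⟨.refl _ _⟩⟩ (ModuleCat.ofHom (N.liftQ _ hN))
  have := hS.epi_g
  have := hS.mono_f
  let θ : ModuleCat.of R (Z →₀ R) ⟶ S.X₂ :=
    ModuleCat.ofHom β - ModuleCat.ofHom N.mkQ ≫ γ ≫ Projective.factorThru δ S.g
  have hθ : θ ≫ S.g = 0 := by
    rw [Preadditive.sub_comp, Category.assoc, Category.assoc, Projective.factorThru_comp, hδγ,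
      sub_eq_zero]
    ext x
    simp
  have hαN : ModuleCat.ofHom α ≫ ModuleCat.ofHom N.mkQ = 0 := by
    ext m
    obtain ⟨w, rfl⟩ := hπ m
    exact (Submodule.Quotient.mk_eq_zero N).2 ⟨w, rfl⟩
  refine ⟨ModuleCat.of R (Z →₀ R), ModuleCat.projective_of_free Finsupp.basisSingleOne,
    ModuleCat.ofHom α, hS.exact.lift θ hθ, ?_⟩
  rw [← cancel_mono S.f, Category.assoc, hS.exact.lift_f, Preadditive.comp_sub,
    reassoc_of% hαN, zero_comp, sub_zero]
  ext : 1
  exact hβα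

end CategoryTheory.ShortComplex.ShortExact

lemma IsCardFiltered.isCardinalFiltered {κ : Cardinal.{u}} [Fact κ.IsRegular] {J : Type u}
    [SmallCategory J] (hJ : IsCardFiltered J κ) : IsCardinalFiltered J κ where
  nonempty_cocone {A _} F hA := by
    refine hJ A _ ?_ ?_ F
    · exact (hasCardinalLT_iff_cardinal_mk_lt _ _).1 (hasCardinalLT_of_hasCardinalLT_arrow hA)
    · refine (hasCardinalLT_iff_cardinal_mk_lt _ _).1 (hA.of_surjective
        (fun f : Arrow A ↦ (⟨f.left, f.right, f.hom⟩ : Σ a b, a ⟶ b)) ?_)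
      rintro ⟨a, b, f⟩
      exact ⟨Arrow.mk f, rfl⟩

section CardinalFilteredColimit

variable {κ : Cardinal.{u}} [Fact κ.IsRegular] {J : Type u} [SmallCategory J]
  [IsCardinalFiltered J κ] {D : J ⥤ ModuleCat.{u} R} {c : Cocone D} (hc : IsColimit c)
include hc

lemma exists_family_eq_ι_app {Y : Type u} (hY : #Y < κ) (a : Y → c.pt) :
    ∃ (j : J) (a' : Y → D.obj j), ∀ y, c.ι.app j (a' y) = a y := by
  have := isFiltered_of_isCardinalFiltered J κ
  choose j a' ha' using fun y ↦ Concrete.isColimit_exists_rep D hc (a y)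
  have hY' := (hasCardinalLT_iff_cardinal_mk_lt _ _).2 hY
  refine ⟨IsCardinalFiltered.max j hY',
    fun y ↦ D.map (IsCardinalFiltered.toMax j hY' y) (a' y), fun y ↦ ?_⟩
  rw [Cocone.w_apply, ha']

lemma exists_map_eq_zero_of_ι_app_eq_zero {X : Type u} (hX : #X < κ) {j : J} (v : X → D.obj j)
    (hv : ∀ x, c.ι.app j (v x) = 0) :
    ∃ (l : J) (h : j ⟶ l), ∀ x, D.map h (v x) = 0 := by
  have := isFiltered_of_isCardinalFiltered J κ
  have hrep (x : X) : ∃ (k : J) (f : j ⟶ k), D.map f (v x) = 0 := by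
    obtain ⟨k, f, f', hk⟩ :=
      Concrete.isColimit_exists_of_rep_eq D hc (v x) (0 : D.obj j) (by rw [hv, map_zero])
    exact ⟨k, f, hk.trans (map_zero _)⟩
  choose k f hf using hrep
  obtain ⟨l, a, h, ha⟩ :=
    IsCardinalFiltered.wideSpan f ((hasCardinalLT_iff_cardinal_mk_lt _ _).2 hX)
  refine ⟨l, h, fun x ↦ ?_⟩
  rw [← ha x, Functor.map_comp, ModuleCat.comp_apply, hf, map_zero]

lemma exists_linearMap_eq_ι_app_comp {Y : Type u} (hY : #Y < κ) (ψ : (Y →₀ R) →ₗ[R] c.pt) :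
    ∃ (j : J) (ψ' : (Y →₀ R) →ₗ[R] D.obj j), (c.ι.app j).hom ∘ₗ ψ' = ψ := by
  obtain ⟨j, a, ha⟩ := exists_family_eq_ι_app hc hY fun y ↦ ψ (Finsupp.single y 1)
  refine ⟨j, Finsupp.linearCombination R a, Finsupp.lhom_ext' fun y ↦ LinearMap.ext_ring ?_⟩
  simp [ha]

lemma exists_quotient_linearMap_eq_ι_app_comp {X Y : Type u} (hX : #X < κ) (hY : #Y < κ)
    (g : (X →₀ R) →ₗ[R] (Y →₀ R)) (φ : ((Y →₀ R) ⧸ LinearMap.range g) →ₗ[R] c.pt) :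
    ∃ (l : J) (μ : ((Y →₀ R) ⧸ LinearMap.range g) →ₗ[R] D.obj l),
      (c.ι.app l).hom ∘ₗ μ = φ := by
  obtain ⟨j, ψ, hψ⟩ := exists_linearMap_eq_ι_app_comp hc hY (φ ∘ₗ (LinearMap.range g).mkQ)
  obtain ⟨l, h, hh⟩ := exists_map_eq_zero_of_ι_app_eq_zero hc hX
    (fun x ↦ ψ (g (Finsupp.single x 1))) fun x ↦ by
      rw [← LinearMap.comp_apply, hψ, LinearMap.comp_apply, Submodule.mkQ_apply,
        (Submodule.Quotient.mk_eq_zero _).2 (LinearMap.mem_range_self g _), map_zero]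
  have hker : LinearMap.range g ≤ LinearMap.ker ((D.map h).hom ∘ₗ ψ) := by
    rw [LinearMap.range_le_ker_iff]
    ext x : 2
    simpa using hh x
  refine ⟨l, (LinearMap.range g).liftQ _ hker, Submodule.linearMap_qext _ ?_⟩
  rw [LinearMap.comp_assoc, Submodule.liftQ_mkQ, ← LinearMap.comp_assoc, ← ModuleCat.hom_comp,
    c.w, hψ]

lemma isKappaFlat_of_isColimit (hD : ∀ j, IsKappaFlat κ (D.obj j)) : IsKappaFlat κ c.pt := by
  intro E hE φ
  obtain ⟨X, Y, hX, hY, g, ⟨e⟩⟩ := hE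
  obtain ⟨l, μ, hμ⟩ :=
    exists_quotient_linearMap_eq_ι_app_comp hc hX hY g (φ.hom ∘ₗ e.toLinearMap)
  obtain ⟨P, hP, α, β, hβα⟩ :=
    hD l E ⟨X, Y, hX, hY, g, ⟨e⟩⟩ (ModuleCat.ofHom (μ ∘ₗ e.symm.toLinearMap))
  refine ⟨P, hP, α, β ≫ c.ι.app l, ?_⟩
  rw [← Category.assoc, hβα]
  ext m
  simpa using LinearMap.congr_fun hμ (e.symm m)

end CardinalFilteredColimit

/-- The class of `κ`-flat left `R`-modules is closed under extensions, kernels of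
surjective morphisms, and `κ`-filtered colimits. -/
theorem isKappaFlat_closure (κ : Cardinal.{u}) (hκ : κ.IsRegular) :
    -- closed under extensions
    (∀ S : ShortComplex (ModuleCat.{u} R), S.ShortExact →
      IsKappaFlat κ S.X₁ → IsKappaFlat κ S.X₃ → IsKappaFlat κ S.X₂) ∧
    -- closed under kernels of surjective morphisms
    (∀ S : ShortComplex (ModuleCat.{u} R), S.ShortExact →
      IsKappaFlat κ S.X₂ → IsKappaFlat κ S.X₃ → IsKappaFlat κ S.X₁) ∧
    -- closed under κ-filtered colimits
    (∀ (J : Type u) (_ : SmallCategory J), IsCardFiltered J κ →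
      ∀ (D : J ⥤ ModuleCat.{u} R), (∀ j, IsKappaFlat κ (D.obj j)) →
      ∀ (c : Cocone D), IsColimit c → IsKappaFlat κ c.pt) := by
  have : Fact κ.IsRegular := ⟨hκ⟩
  refine ⟨fun S hS ↦ hS.isKappaFlat_X₂, fun S hS ↦ hS.isKappaFlat_X₁ hκ,
    fun J _ hJ D hD c hc ↦ ?_⟩
  have := hJ.isCardinalFiltered
  exact isKappaFlat_of_isColimit hc hD
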